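/- Uniqueness for the sand-transport Robin problem: let i ∈ {1,2}, ε > 0, T > 0, let 𝒜 : [0,T)×ℝ² → ℝ and 𝒞 : [0,T)×ℝ² → ℝ² be C¹ on an open set containing [0,T)×closure(Ω) with 𝒜(t,x) ≥ 0 there, let z₀ : ℝ² → ℝ and g : [0,T)×ℝ² → ℝ be continuous. If z₁ and z₂ are both classical solutions of ∂z/∂t − (1/εⁱ)∇·(𝒜∇z) = (1/εⁱ)∇·𝒞 in (0,T)×Ω, with z(0,·) = z₀ on Ω and ∂z/∂n + z = g on (0,T)×∂Ω, then z₁ = z₂ on [0,T)×closure(Ω). -/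

import Mathlib

/-!
The difference `w = z₁ - z₂` solves the homogeneous problem `∂ₜw = ε⁻ⁱ ∇·(𝒜∇w)` with `w(0) = 0`
and `∂w/∂n = -w`. By the divergence theorem applied to `w 𝒜 ∇w`, its energy `∫_Ω w²` has derivative
`(2/εⁱ) ∫_Ω w ∇·(𝒜∇w) = -(2/εⁱ) (∫_∂Ω 𝒜 w² dσ + ∫_Ω 𝒜 |∇w|²) ≤ 0`, so it stays zero. Hence
`w = 0` on `Ω`, and on its closure by continuity.
-/

open MeasureTheory Set Real
open scoped RealInnerProductSpace

noncomputable section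

abbrev E2 : Type := EuclideanSpace ℝ (Fin 2)

/-- Divergence of a vector field on the plane. -/
def vdiv (F : E2 → E2) (x : E2) : ℝ := ∑ i, fderiv ℝ F x (EuclideanSpace.single i 1) i

/-- A nonempty bounded open set in the plane with `C¹` boundary described by a defining
function `Φ`. -/
structure C1Domain where
  Ω : Set E2
  Φ : E2 → ℝ
  nonempty : Ω.Nonempty
  bounded : Bornology.IsBounded Ω
  isOpen : IsOpen Ω
  smoothΦ : ContDiff ℝ 1 Φ
  eq_dom : Ω = {x | Φ x < 0}
  eq_bd : frontier Ω = {x | Φ x = 0}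
  grad_ne : ∀ x ∈ frontier Ω, gradient Φ x ≠ 0

/-- Outward unit normal. -/
def nml (D : C1Domain) (x : E2) : E2 := ‖gradient D.Φ x‖⁻¹ • gradient D.Φ x

/-- The divergence theorem holds on the domain. -/
def DivergenceThm (D : C1Domain) : Prop :=
  ∀ F : E2 → E2, (∃ U : Set E2, IsOpen U ∧ closure D.Ω ⊆ U ∧ ContDiffOn ℝ 1 F U) →
    (∫ x in D.Ω, vdiv F x) = ∫ x in frontier D.Ω, ⟪F x, nml D x⟫ ∂μH[1]

/-- `z` is `C¹` in `t` and `C²` in `x` on an open set containing `[0,T) × closure Ω`. -/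
def ClassicalReg (T : ℝ) (D : C1Domain) (z : ℝ → E2 → ℝ) : Prop :=
  ∃ U : Set (ℝ × E2), IsOpen U ∧ (Ico 0 T ×ˢ closure D.Ω) ⊆ U ∧
    ContDiffOn ℝ 1 (fun p : ℝ × E2 => z p.1 p.2) U ∧
    ∀ t : ℝ, ContDiffOn ℝ 2 (fun x => z t x) {x | (t, x) ∈ U}

theorem ContinuousOn.comp_prodMk_right {X Y Z : Type*} [TopologicalSpace X] [TopologicalSpace Y]
    [TopologicalSpace Z] {f : X × Y → Z} {U : Set (X × Y)} (hf : ContinuousOn f U) {t : X}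
    {K : Set Y} (hK : {t} ×ˢ K ⊆ U) : ContinuousOn (fun x => f (t, x)) K :=
  hf.comp (Continuous.prodMk_right t).continuousOn fun _ hx => hK ⟨rfl, hx⟩

section SliceDerivative

variable {E F : Type*} [NormedAddCommGroup E] [NormedSpace ℝ E]
  [NormedAddCommGroup F] [NormedSpace ℝ F] {U : Set (ℝ × E)}

theorem ContDiffOn.hasDerivAt_slice {f : ℝ → E → F} (hU : IsOpen U)
    (hf : ContDiffOn ℝ 1 (fun p : ℝ × E => f p.1 p.2) U) {t : ℝ} {x : E} (h : (t, x) ∈ U) :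
    HasDerivAt (fun s => f s x) (fderiv ℝ (fun p : ℝ × E => f p.1 p.2) (t, x) (1, 0)) t :=
  ((hf.differentiableOn one_ne_zero _ h).differentiableAt (hU.mem_nhds h)).hasFDerivAt
    |>.comp_hasDerivAt (l := fun p : ℝ × E => f p.1 p.2) t
      ((hasDerivAt_id t).prodMk (hasDerivAt_const t x))

theorem ContDiffOn.contDiffAt_slice {f : ℝ → E → F} {n : WithTop ℕ∞} (hU : IsOpen U)
    (hf : ContDiffOn ℝ n (fun p : ℝ × E => f p.1 p.2) U) {t : ℝ} {x : E} (h : (t, x) ∈ U) :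
    ContDiffAt ℝ n (f t) x :=
  (hf.contDiffAt (hU.mem_nhds h)).comp (g := fun p : ℝ × E => f p.1 p.2) x
    (contDiff_prodMk_right t).contDiffAt

theorem ContDiffOn.continuousOn_fderiv_apply {f : ℝ × E → F} (hU : IsOpen U)
    (hf : ContDiffOn ℝ 1 f U) (v : ℝ × E) : ContinuousOn (fun p => fderiv ℝ f p v) U :=
  (ContinuousLinearMap.apply ℝ F v).continuous.comp_continuousOn
    (hf.continuousOn_fderiv_of_isOpen hU le_rfl)

theorem ContDiffOn.hasDerivAt_setIntegral [MeasurableSpace E] [OpensMeasurableSpace E]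
    {μ : Measure E} [IsFiniteMeasureOnCompacts μ] {f : ℝ → E → ℝ} {K s : Set E} {t₀ : ℝ}
    (hU : IsOpen U) (hf : ContDiffOn ℝ 1 (fun p : ℝ × E => f p.1 p.2) U) (hK : IsCompact K)
    (hKU : {t₀} ×ˢ K ⊆ U) (hs : MeasurableSet s) (hsK : s ⊆ K) :
    HasDerivAt (fun t => ∫ x in s, f t x ∂μ) (∫ x in s, deriv (fun t => f t x) t₀ ∂μ) t₀ := by
  obtain ⟨u, v, hu, -, ht₀u, hKv, huv⟩ := generalized_tube_lemma isCompact_singleton hK hU hKU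
  obtain ⟨δ, hδ, hδu⟩ := Metric.nhds_basis_closedBall.mem_iff.1 (hu.mem_nhds (ht₀u rfl))
  have hball : ∀ t ∈ Metric.closedBall t₀ δ, {t} ×ˢ K ⊆ U := fun t ht p ⟨hp₁, hp₂⟩ =>
    huv ⟨(hp₁ : p.1 = t) ▸ hδu ht, hKv hp₂⟩
  set df := fun p => fderiv ℝ (fun p : ℝ × E => f p.1 p.2) p (1, 0)
  have hcont : ContinuousOn df U := hf.continuousOn_fderiv_apply hU _
  obtain ⟨M, hM⟩ := ((isCompact_closedBall t₀ δ).prod hK).exists_bound_of_continuousOn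
    (hcont.mono fun p ⟨hp₁, hp₂⟩ => hball p.1 hp₁ ⟨rfl, hp₂⟩)
  have hderiv : ∀ t ∈ Metric.closedBall t₀ δ, ∀ x ∈ K, HasDerivAt (f · x) (df (t, x)) t :=
    fun t ht x hx => hf.hasDerivAt_slice hU (hball t ht ⟨rfl, hx⟩)
  have hslice : ∀ t ∈ Metric.closedBall t₀ δ, ContinuousOn (f t) K := fun t ht =>
    hf.continuousOn.comp_prodMk_right (hball t ht)
  have ht₀ : t₀ ∈ Metric.closedBall t₀ δ := Metric.mem_closedBall_self hδ.le
  refine (hasDerivAt_integral_of_dominated_loc_of_deriv_le (bound := fun _ => M)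
    (F' := fun t x => deriv (f · x) t) (Metric.ball_mem_nhds t₀ hδ) ?_ ?_ ?_ ?_ ?_ ?_).2
  · filter_upwards [Metric.ball_mem_nhds t₀ hδ] with t ht
    exact ((hslice t (Metric.ball_subset_closedBall ht)).mono hsK).aestronglyMeasurable hs
  · exact ((hslice t₀ ht₀).integrableOn_compact hK).mono_set hsK
  · refine (((hcont.comp_prodMk_right (hball t₀ ht₀)).mono hsK).congr fun x hx => ?_
      ).aestronglyMeasurable hs
    exact (hderiv t₀ ht₀ x (hsK hx)).deriv
  · refine ae_restrict_of_forall_mem hs fun x hx t ht => ?_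
    have ht' := Metric.ball_subset_closedBall ht
    rw [(hderiv t ht' x (hsK hx)).deriv]
    exact hM (t, x) ⟨ht', hsK hx⟩
  · exact integrableOn_const ((measure_mono hsK).trans_lt hK.measure_lt_top).ne
  · exact ae_restrict_of_forall_mem hs fun x hx t ht =>
      (hderiv t (Metric.ball_subset_closedBall ht) x (hsK hx)).differentiableAt.hasDerivAt

end SliceDerivative

section Gradient

variable {F : Type*} [NormedAddCommGroup F] [InnerProductSpace ℝ F] [CompleteSpace F]
  {f g : F → ℝ}

theorem gradient_fun_sub {x : F} (hf : DifferentiableAt ℝ f x) (hg : DifferentiableAt ℝ g x) :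
    gradient (fun y => f y - g y) x = gradient f x - gradient g x := by
  simp [gradient, fderiv_fun_sub hf hg]

theorem ContDiffOn.gradient_of_isOpen {s : Set F} {n : WithTop ℕ∞}
    (hf : ContDiffOn ℝ (n + 1) f s) (hs : IsOpen s) : ContDiffOn ℝ n (gradient f) s :=
  (InnerProductSpace.toDual ℝ F).symm.toContinuousLinearEquiv.contDiff.comp_contDiffOn
    (hf.fderiv_of_isOpen hs le_rfl)

theorem ContDiffAt.gradient {x : F} {n : WithTop ℕ∞} (hf : ContDiffAt ℝ (n + 1) f x) :
    ContDiffAt ℝ n (gradient f) x :=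
  (InnerProductSpace.toDual ℝ F).symm.toContinuousLinearEquiv.contDiff.contDiffAt.comp x
    hf.fderiv_right_succ

end Gradient

theorem vdiv_fun_sub {F G : E2 → E2} {x : E2} (hF : DifferentiableAt ℝ F x)
    (hG : DifferentiableAt ℝ G x) :
    vdiv (fun y => F y - G y) x = vdiv F x - vdiv G x := by
  simp [vdiv, fderiv_fun_sub hF hG, Finset.sum_sub_distrib]

theorem vdiv_fun_smul {f : E2 → ℝ} {F : E2 → E2} {x : E2} (hf : DifferentiableAt ℝ f x)
    (hF : DifferentiableAt ℝ F x) :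
    vdiv (fun y => f y • F y) x = ⟪gradient f x, F x⟫ + f x * vdiv F x := by
  have hgrad : ⟪gradient f x, F x⟫ = ∑ i, fderiv ℝ f x (EuclideanSpace.single i 1) * F x i := by
    conv_lhs => rw [← (EuclideanSpace.basisFun (Fin 2) ℝ).sum_repr (F x)]
    simp [inner_gradient_left, mul_comm]
  simp only [vdiv, fderiv_fun_smul hf hF, add_apply,
    smul_apply, ContinuousLinearMap.smulRight_apply, PiLp.add_apply,
    PiLp.smul_apply, smul_eq_mul, Fin.sum_univ_two, hgrad]
  ring

theorem Filter.EventuallyEq.vdiv_eq {F G : E2 → E2} {x : E2} (h : F =ᶠ[nhds x] G) :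
    vdiv F x = vdiv G x := by
  simp only [vdiv, h.fderiv_eq]

theorem ContDiffOn.continuousOn_vdiv {F : E2 → E2} {s : Set E2} (hF : ContDiffOn ℝ 1 F s)
    (hs : IsOpen s) : ContinuousOn (vdiv F) s := by
  have h := hF.continuousOn_fderiv_of_isOpen hs le_rfl
  refine continuousOn_finsetSum _ fun i _ => ?_
  exact (by fun_prop : Continuous fun L : E2 →L[ℝ] E2 => L (EuclideanSpace.single i 1) i)
    |>.comp_continuousOn h

theorem vdiv_smul_gradient_sub {a z₁ z₂ : E2 → ℝ} {x : E2} (ha : ContDiffAt ℝ 1 a x)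
    (hz₁ : ContDiffAt ℝ 2 z₁ x) (hz₂ : ContDiffAt ℝ 2 z₂ x) :
    vdiv (fun y => a y • gradient (fun y => z₁ y - z₂ y) y) x
      = vdiv (fun y => a y • gradient z₁ y) x - vdiv (fun y => a y • gradient z₂ y) x := by
  have hflux {z : E2 → ℝ} (hz : ContDiffAt ℝ 2 z x) :
      DifferentiableAt ℝ (fun y => a y • gradient z y) x :=
    (ha.smul (hz.gradient (n := 1))).differentiableAt one_ne_zero
  rw [← vdiv_fun_sub (hflux hz₁) (hflux hz₂)]
  refine Filter.EventuallyEq.vdiv_eq ?_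
  filter_upwards [hz₁.eventually (by simp), hz₂.eventually (by simp)] with y hy₁ hy₂
  rw [gradient_fun_sub (hy₁.differentiableAt two_ne_zero) (hy₂.differentiableAt two_ne_zero),
    smul_sub]

theorem eqOn_zero_of_setIntegral_sq_eq_zero {X : Type*} [TopologicalSpace X] [MeasurableSpace X]
    [OpensMeasurableSpace X] {μ : Measure X} [μ.IsOpenPosMeasure] {f : X → ℝ} {s : Set X}
    (hs : IsOpen s) (hf : ContinuousOn f s) (hint : IntegrableOn (fun x => f x ^ 2) s μ)
    (h : ∫ x in s, f x ^ 2 ∂μ = 0) : EqOn f 0 s := fun _ hx =>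
  pow_eq_zero_iff two_ne_zero |>.1 <| Measure.eqOn_open_of_ae_eq
    ((integral_eq_zero_iff_of_nonneg (fun x => sq_nonneg (f x)) hint).1 h) hs (hf.pow 2)
    continuousOn_const hx


namespace ClassicalReg

variable {T : ℝ} {D : C1Domain} {z z₁ z₂ : ℝ → E2 → ℝ} {t : ℝ} {x : E2}

theorem sub (h₁ : ClassicalReg T D z₁) (h₂ : ClassicalReg T D z₂) :
    ClassicalReg T D (fun t x => z₁ t x - z₂ t x) := by
  obtain ⟨U₁, hU₁, hU₁Ω, hz₁, hz₁₂⟩ := h₁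
  obtain ⟨U₂, hU₂, hU₂Ω, hz₂, hz₂₂⟩ := h₂
  exact ⟨U₁ ∩ U₂, hU₁.inter hU₂, subset_inter hU₁Ω hU₂Ω,
    (hz₁.mono inter_subset_left).sub (hz₂.mono inter_subset_right),
    fun t => ((hz₁₂ t).mono fun _ h => h.1).sub ((hz₂₂ t).mono fun _ h => h.2)⟩

theorem differentiableAt_time (h : ClassicalReg T D z) (ht : t ∈ Ico 0 T)
    (hx : x ∈ closure D.Ω) : DifferentiableAt ℝ (fun s => z s x) t := by
  obtain ⟨U, hU, hUΩ, hz, -⟩ := h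
  exact (hz.hasDerivAt_slice hU (hUΩ ⟨ht, hx⟩)).differentiableAt

theorem contDiffAt (h : ClassicalReg T D z) (ht : t ∈ Ico 0 T) (hx : x ∈ closure D.Ω) :
    ContDiffAt ℝ 2 (z t) x := by
  obtain ⟨U, hU, hUΩ, -, hz⟩ := h
  exact (hz t).contDiffAt ((hU.preimage (.prodMk_right t)).mem_nhds (hUΩ ⟨ht, hx⟩))

theorem hasDerivAt_setIntegral_sq (h : ClassicalReg T D z) (ht : t ∈ Ico 0 T) :
    HasDerivAt (fun t => ∫ x in D.Ω, z t x ^ 2)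
      (∫ x in D.Ω, 2 * z t x * deriv (fun s => z s x) t) t := by
  obtain ⟨U, hU, hUΩ, hz, -⟩ := h
  have hΩm : MeasurableSet D.Ω := D.isOpen.measurableSet
  convert (hz.pow 2).hasDerivAt_setIntegral (μ := volume) (f := fun t x => z t x ^ 2) hU
    D.bounded.isCompact_closure (fun p ⟨hp₁, hp₂⟩ => hUΩ ⟨(hp₁ : p.1 = t) ▸ ht, hp₂⟩) hΩm
    subset_closure using 1
  refine setIntegral_congr_fun hΩm fun x hx => ?_
  rw [deriv_fun_pow (hz.hasDerivAt_slice hU (hUΩ ⟨ht, subset_closure hx⟩)).differentiableAt]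
  ring

end ClassicalReg

namespace C1Domain

theorem integrableOn_of_continuousOn (D : C1Domain) {f : E2 → ℝ}
    (hf : ContinuousOn f (closure D.Ω)) : IntegrableOn f D.Ω :=
  (hf.integrableOn_compact D.bounded.isCompact_closure).mono_set subset_closure

theorem setIntegral_mul_vdiv_smul_gradient_nonpos (D : C1Domain) (hdiv : DivergenceThm D)
    {a w : E2 → ℝ} {V : Set E2} (hV : IsOpen V) (hΩV : closure D.Ω ⊆ V)
    (ha : ContDiffOn ℝ 1 a V) (hw : ContDiffOn ℝ 2 w V) (ha₀ : ∀ x ∈ closure D.Ω, 0 ≤ a x)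
    (hbc : ∀ x ∈ frontier D.Ω, w x * ⟪gradient w x, nml D x⟫ ≤ 0) :
    ∫ x in D.Ω, w x * vdiv (fun y => a y • gradient w y) x ≤ 0 := by
  set G : E2 → E2 := fun y => a y • gradient w y
  have hG : ContDiffOn ℝ 1 G V := ha.smul (hw.gradient_of_isOpen hV)
  have hwG : ContDiffOn ℝ 1 (fun y => w y • G y) V := (hw.of_le one_le_two).smul hG
  have hΩm : MeasurableSet D.Ω := D.isOpen.measurableSet
  have hpointwise : ∀ x ∈ D.Ω,
      w x * vdiv G x = vdiv (fun y => w y • G y) x - a x * ‖gradient w x‖ ^ 2 := by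
    intro x hx
    have hxV : x ∈ V := hΩV (subset_closure hx)
    rw [vdiv_fun_smul ((hw.differentiableOn two_ne_zero x hxV).differentiableAt (hV.mem_nhds hxV))
      ((hG.differentiableOn one_ne_zero x hxV).differentiableAt (hV.mem_nhds hxV)),
      real_inner_smul_right, real_inner_self_eq_norm_sq]
    ring
  have hflux : ∫ x in D.Ω, vdiv (fun y => w y • G y) x ≤ 0 := by
    rw [hdiv _ ⟨V, hV, hΩV, hwG⟩]
    refine setIntegral_nonpos isClosed_frontier.measurableSet fun x hx => ?_
    simp only [G, real_inner_smul_left]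
    nlinarith [ha₀ x (frontier_subset_closure hx), hbc x hx]
  have hdissipation : 0 ≤ ∫ x in D.Ω, a x * ‖gradient w x‖ ^ 2 :=
    setIntegral_nonneg hΩm fun x hx => mul_nonneg (ha₀ x (subset_closure hx)) (sq_nonneg _)
  have hint : IntegrableOn (fun x => a x * ‖gradient w x‖ ^ 2) D.Ω :=
    D.integrableOn_of_continuousOn <|
      (ha.continuousOn.mul ((hw.gradient_of_isOpen (n := 1) hV).continuousOn.norm.pow 2)).mono hΩV
  rw [setIntegral_congr_fun hΩm hpointwise,
    integral_sub (D.integrableOn_of_continuousOn ((hwG.continuousOn_vdiv hV).mono hΩV)) hint]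
  linarith

theorem eq_zero_of_homogeneous_problem (D : C1Domain) (hdiv : DivergenceThm D)
    {κ T : ℝ} (hκ : 0 ≤ κ) {a w : ℝ → E2 → ℝ} {UA : Set (ℝ × E2)} (hUA : IsOpen UA)
    (hUAΩ : Ico 0 T ×ˢ closure D.Ω ⊆ UA) (ha : ContDiffOn ℝ 1 (fun p : ℝ × E2 => a p.1 p.2) UA)
    (ha₀ : ∀ t ∈ Ioo 0 T, ∀ x ∈ closure D.Ω, 0 ≤ a t x) (hw : ClassicalReg T D w)
    (hpde : ∀ t ∈ Ioo 0 T, ∀ x ∈ D.Ω,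
      deriv (fun s => w s x) t = κ * vdiv (fun y => a t y • gradient (w t) y) x)
    (hinit : ∀ x ∈ D.Ω, w 0 x = 0)
    (hbc : ∀ t ∈ Ioo 0 T, ∀ x ∈ frontier D.Ω, w t x * ⟪gradient (w t) x, nml D x⟫ ≤ 0) :
    ∀ t ∈ Ico 0 T, ∀ x ∈ closure D.Ω, w t x = 0 := by
  set energy : ℝ → ℝ := fun t => ∫ x in D.Ω, w t x ^ 2
  set energy' : ℝ → ℝ := fun t => ∫ x in D.Ω, 2 * w t x * deriv (fun s => w s x) t
  have henergy : ∀ t ∈ Ico 0 T, HasDerivAt energy (energy' t) t := fun t ht =>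
    hw.hasDerivAt_setIntegral_sq ht
  obtain ⟨U, hU, hUΩ, -, hw₂⟩ := hw
  have hΩm : MeasurableSet D.Ω := D.isOpen.measurableSet
  have henergy' : ∀ t ∈ Ioo 0 T,
      energy' t = 2 * κ * ∫ x in D.Ω, w t x * vdiv (fun y => a t y • gradient (w t) y) x := by
    intro t ht
    rw [← integral_const_mul]
    refine setIntegral_congr_fun hΩm fun x hx => ?_
    rw [hpde t ht x hx]
    ring
  have hdissipation : ∀ t ∈ Ioo 0 T, energy' t ≤ 0 := by
    intro t ht
    have ht' := Ioo_subset_Ico_self ht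
    rw [henergy' t ht]
    refine mul_nonpos_of_nonneg_of_nonpos (by positivity) <|
      D.setIntegral_mul_vdiv_smul_gradient_nonpos hdiv ((hU.inter hUA).preimage (.prodMk_right t))
        (fun x hx => ⟨hUΩ ⟨ht', hx⟩, hUAΩ ⟨ht', hx⟩⟩)
        (ha.comp (contDiff_prodMk_right t).contDiffOn fun _ h => h.2)
        ((hw₂ t).mono fun _ h => h.1) (ha₀ t ht) (hbc t ht)
  have hanti : AntitoneOn energy (Ico 0 T) := by
    refine antitoneOn_of_hasDerivWithinAt_nonpos (convex_Ico 0 T) (f' := energy')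
      (fun t ht => (henergy t ht).continuousAt.continuousWithinAt) ?_ ?_ <;> rw [interior_Ico]
    exacts [fun t ht => (henergy t (Ioo_subset_Ico_self ht)).hasDerivWithinAt, hdissipation]
  intro t ht
  have hcont : ContinuousOn (w t) (closure D.Ω) :=
    (hw₂ t).continuousOn.mono fun x hx => hUΩ ⟨ht, hx⟩
  have henergy₀ : energy 0 = 0 := by
    simp [energy, setIntegral_congr_fun hΩm fun x hx => congrArg (· ^ 2) (hinit x hx)]
  have henergy_t : energy t = 0 :=
    le_antisymm (henergy₀ ▸ hanti ⟨le_rfl, ht.1.trans_lt ht.2⟩ ht ht.1)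
      (setIntegral_nonneg hΩm fun x _ => sq_nonneg (w t x))
  exact EqOn.of_subset_closure (eqOn_zero_of_setIntegral_sq_eq_zero D.isOpen
    (hcont.mono subset_closure) (D.integrableOn_of_continuousOn (hcont.pow 2)) henergy_t)
    hcont continuousOn_const subset_closure subset_rfl

end C1Domain

theorem stmt0_general
    (D : C1Domain) (hdiv : DivergenceThm D)
    (i : ℕ)
    (ε T : ℝ) (hε : 0 < ε)
    (A : ℝ → E2 → ℝ) (C : ℝ → E2 → E2)
    (UA : Set (ℝ × E2)) (hUAopen : IsOpen UA) (hUAsub : Ico 0 T ×ˢ closure D.Ω ⊆ UA)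
    (hA : ContDiffOn ℝ 1 (fun p : ℝ × E2 => A p.1 p.2) UA)
    (hApos : ∀ p ∈ UA, 0 ≤ A (Prod.fst p) (Prod.snd p))
    (z₀ : E2 → ℝ)
    (g : ℝ → E2 → ℝ)
    (z₁ z₂ : ℝ → E2 → ℝ)
    (hreg1 : ClassicalReg T D z₁) (hreg2 : ClassicalReg T D z₂)
    (hpde1 : ∀ t ∈ Ioo 0 T, ∀ x ∈ D.Ω,
      deriv (fun s => z₁ s x) t
          - (1 / ε ^ i) * vdiv (fun y => A t y • gradient (z₁ t) y) x
        = (1 / ε ^ i) * vdiv (C t) x)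
    (hpde2 : ∀ t ∈ Ioo 0 T, ∀ x ∈ D.Ω,
      deriv (fun s => z₂ s x) t
          - (1 / ε ^ i) * vdiv (fun y => A t y • gradient (z₂ t) y) x
        = (1 / ε ^ i) * vdiv (C t) x)
    (hinit1 : ∀ x ∈ D.Ω, z₁ 0 x = z₀ x)
    (hinit2 : ∀ x ∈ D.Ω, z₂ 0 x = z₀ x)
    (hbc1 : ∀ t ∈ Ioo 0 T, ∀ x ∈ frontier D.Ω,
      ⟪gradient (z₁ t) x, nml D x⟫ + z₁ t x = g t x)
    (hbc2 : ∀ t ∈ Ioo 0 T, ∀ x ∈ frontier D.Ω,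
      ⟪gradient (z₂ t) x, nml D x⟫ + z₂ t x = g t x) :
    ∀ t ∈ Ico 0 T, ∀ x ∈ closure D.Ω, z₁ t x = z₂ t x := by
  suffices ∀ t ∈ Ico 0 T, ∀ x ∈ closure D.Ω, z₁ t x - z₂ t x = 0 from
    fun t ht x hx => sub_eq_zero.1 (this t ht x hx)
  refine D.eq_zero_of_homogeneous_problem hdiv (by positivity : 0 ≤ 1 / ε ^ i) hUAopen hUAsub hA
    (fun t ht x hx => hApos (t, x) (hUAsub ⟨Ioo_subset_Ico_self ht, hx⟩)) (hreg1.sub hreg2)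
    (fun t ht x hx => ?_) (fun x hx => by simp [hinit1 x hx, hinit2 x hx]) (fun t ht x hx => ?_)
  · have ht' := Ioo_subset_Ico_self ht
    have hx' := subset_closure hx
    rw [deriv_fun_sub (hreg1.differentiableAt_time ht' hx') (hreg2.differentiableAt_time ht' hx'),
      vdiv_smul_gradient_sub (hA.contDiffAt_slice hUAopen (hUAsub ⟨ht', hx'⟩))
        (hreg1.contDiffAt ht' hx') (hreg2.contDiffAt ht' hx')]
    linarith [hpde1 t ht x hx, hpde2 t ht x hx]
  · have ht' := Ioo_subset_Ico_self ht
    have hx' := frontier_subset_closure hx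
    have hrobin : ⟪gradient (fun y => z₁ t y - z₂ t y) x, nml D x⟫ = -(z₁ t x - z₂ t x) := by
      rw [gradient_fun_sub ((hreg1.contDiffAt ht' hx').differentiableAt two_ne_zero)
        ((hreg2.contDiffAt ht' hx').differentiableAt two_ne_zero), inner_sub_left]
      linarith [hbc1 t ht x hx, hbc2 t ht x hx]
    rw [hrobin, mul_neg]
    exact neg_nonpos.2 (mul_self_nonneg _)

/-- uniqueness of classical solutions of the sand-transport Robin problem
`∂z/∂t − (1/εⁱ)∇·(𝒜∇z) = (1/εⁱ)∇·𝒞` in `(0,T)×Ω`, `z(0,·) = z₀` in `Ω`,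
`∂z/∂n + z = g` on `(0,T)×∂Ω`. -/
theorem stmt0
    (D : C1Domain) (hdiv : DivergenceThm D)
    (i : ℕ) (hi : i = 1 ∨ i = 2)
    (ε T : ℝ) (hε : 0 < ε) (hT : 0 < T)
    (A : ℝ → E2 → ℝ) (C : ℝ → E2 → E2)
    (UA : Set (ℝ × E2)) (hUAopen : IsOpen UA) (hUAsub : Ico 0 T ×ˢ closure D.Ω ⊆ UA)
    (hA : ContDiffOn ℝ 1 (fun p : ℝ × E2 => A p.1 p.2) UA)
    (hC : ContDiffOn ℝ 1 (fun p : ℝ × E2 => C p.1 p.2) UA)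
    (hApos : ∀ p ∈ UA, 0 ≤ A (Prod.fst p) (Prod.snd p))
    (z₀ : E2 → ℝ) (hz₀ : Continuous z₀)
    (g : ℝ → E2 → ℝ) (hg : Continuous fun p : ℝ × E2 => g p.1 p.2)
    (z₁ z₂ : ℝ → E2 → ℝ)
    (hreg1 : ClassicalReg T D z₁) (hreg2 : ClassicalReg T D z₂)
    (hpde1 : ∀ t ∈ Ioo 0 T, ∀ x ∈ D.Ω,
      deriv (fun s => z₁ s x) t
          - (1 / ε ^ i) * vdiv (fun y => A t y • gradient (z₁ t) y) x
        = (1 / ε ^ i) * vdiv (C t) x)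
    (hpde2 : ∀ t ∈ Ioo 0 T, ∀ x ∈ D.Ω,
      deriv (fun s => z₂ s x) t
          - (1 / ε ^ i) * vdiv (fun y => A t y • gradient (z₂ t) y) x
        = (1 / ε ^ i) * vdiv (C t) x)
    (hinit1 : ∀ x ∈ D.Ω, z₁ 0 x = z₀ x)
    (hinit2 : ∀ x ∈ D.Ω, z₂ 0 x = z₀ x)
    (hbc1 : ∀ t ∈ Ioo 0 T, ∀ x ∈ frontier D.Ω,
      ⟪gradient (z₁ t) x, nml D x⟫ + z₁ t x = g t x)
    (hbc2 : ∀ t ∈ Ioo 0 T, ∀ x ∈ frontier D.Ω,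
      ⟪gradient (z₂ t) x, nml D x⟫ + z₂ t x = g t x) :
    ∀ t ∈ Ico 0 T, ∀ x ∈ closure D.Ω, z₁ t x = z₂ t x :=
  stmt0_general D hdiv i ε T hε A C UA hUAopen hUAsub hA hApos z₀ g z₁ z₂ hreg1 hreg2 hpde1 hpde2
    hinit1 hinit2 hbc1 hbc2

end
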